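/- Let π be a one-block factor code from a one-step SFT X to a sofic shift Y, with f = max_{w ∈ 𝒜(Y)} |π_b^{-1}(w)|, and let A, B ⊆ 𝒜(X). If A pairs with B in form γ (i.e., there exists a Y-block W of length n+1 with π_b^{-1}(W)_0 = A, π_b^{-1}(W)_n = B, and P_W(A,B) = γ), then there exists such a block of length at most |𝒜(Y)| · 2^{f² + f} + 1 realizing the same form γ. -/

import Mathlib

open List

/-- `U` is a (nonempty) block of the one-step SFT `X` determined by the
transition relation `TX`. -/
def IsXBlock {AX : Type*} (TX : AX → AX → Prop) (U : List AX) : Prop :=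
  U ≠ [] ∧ U.Chain' TX

/-- The set of `X`-blocks mapping (symbol-wise, via `πb`) to the word `W`. -/
def preim {AX AY : Type*} (TX : AX → AX → Prop) (πb : AX → AY) (W : List AY) :
    Set (List AX) :=
  {U | IsXBlock TX U ∧ U.map πb = W}

/-- `W` is a block of the sofic shift `Y = π(X)`. -/
def IsYBlock {AX AY : Type*} (TX : AX → AX → Prop) (πb : AX → AY) (W : List AY) : Prop :=
  (preim TX πb W).Nonempty

/-- `π_b^{-1}(W)_i`: the symbols occurring at position `i` in some preimage block of `W`. -/
def preimAt {AX AY : Type*} (TX : AX → AX → Prop) (πb : AX → AY) (W : List AY) (i : ℕ) :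
    Set AX :=
  {a | ∃ U ∈ preim TX πb W, U[i]? = some a}

/-- The `W`-pairing: the set of (first symbol, last symbol) pairs realized by
preimage blocks of `W`. -/
def pairing {AX AY : Type*} (TX : AX → AX → Prop) (πb : AX → AY) (W : List AY) :
    Set (AX × AX) :=
  {p | ∃ U ∈ preim TX πb W, U.head? = some p.1 ∧ U.getLast? = some p.2}

/-- `U ∈ π_b^{-1}(W)` is routable through `a` at time `n`. -/
def Routable {AX AY : Type*} (TX : AX → AX → Prop) (πb : AX → AY) (W : List AY) (n : ℕ)
    (a : AX) (U : List AX) : Prop :=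
  ∃ U' ∈ preim TX πb W, U'.head? = U.head? ∧ U'[n]? = some a ∧ U'.getLast? = U.getLast?

/-- `(W, n, M)` is a transition block. -/
def IsTransBlock {AX AY : Type*} (TX : AX → AX → Prop) (πb : AX → AY) (W : List AY)
    (n : ℕ) (M : Finset AX) : Prop :=
  IsYBlock TX πb W ∧ 0 < n ∧ n < W.length - 1 ∧
    (∀ a ∈ M, a ∈ preimAt TX πb W n) ∧
    ∀ U ∈ preim TX πb W, ∃ a ∈ M, Routable TX πb W n a U

/-- The fiber `π_b^{-1}(b)` of a `Y`-symbol. -/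
def fiber {AX AY : Type*} [Fintype AX] [DecidableEq AY] (πb : AX → AY) (b : AY) :
    Finset AX :=
  Finset.univ.filter (fun a => πb a = b)

/-- `f = max_{w ∈ 𝒜(Y)} |π_b^{-1}(w)|`. -/
def fMax {AX AY : Type*} [Fintype AX] [Fintype AY] [DecidableEq AY] (πb : AX → AY) : ℕ :=
  Finset.univ.sup (fun b : AY => (fiber πb b).card)

/-!
The pairing of a concatenation `W₁ ++ W₂` is the relational composite of the pairing of `W₁`,
one transition of `X`, and the pairing of `W₂`; so replacing a prefix by another with the same
pairing does not change the pairing of the whole word. The pairing of a prefix `W₀ ⋯ W_k` is a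
relation between `π_b⁻¹(W₀)` and `π_b⁻¹(W_k)`, so prefixes realize at most `|𝒜(Y)| · 2 ^ f²`
pairings, and in a longer word two prefixes share one and the block between them can be
excised. The sets `A` and `B` are the projections of the pairing, hence are preserved as well.
-/

open SetRel

section Pairing

variable {AX AY : Type*} {TX : AX → AX → Prop} {πb : AX → AY}

lemma length_eq_of_mem_preim {W : List AY} {U : List AX} (hU : U ∈ preim TX πb W) :
    U.length = W.length := by
  simpa using congrArg List.length hU.2

lemma ne_nil_of_mem_preim {W : List AY} {U : List AX} (hU : U ∈ preim TX πb W) : U ≠ [] :=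
  hU.1.1

lemma isYBlock_iff_pairing_nonempty {W : List AY} :
    IsYBlock TX πb W ↔ (pairing TX πb W).Nonempty := by
  constructor
  · rintro ⟨U, hU⟩
    have hne := ne_nil_of_mem_preim hU
    exact ⟨(U.head hne, U.getLast hne), U, hU, List.head?_eq_some_head hne,
      List.getLast?_eq_some_getLast hne⟩
  · rintro ⟨_, U, hU, -⟩
    exact ⟨U, hU⟩

variable (TX πb) in
lemma preimAt_zero (W : List AY) : preimAt TX πb W 0 = Prod.fst '' pairing TX πb W := by
  ext a
  constructor
  · rintro ⟨U, hU, ha⟩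
    have hne := ne_nil_of_mem_preim hU
    exact ⟨(a, U.getLast hne), ⟨U, hU, by rwa [List.head?_eq_getElem?],
      List.getLast?_eq_some_getLast hne⟩, rfl⟩
  · rintro ⟨_, ⟨U, hU, hhead, -⟩, rfl⟩
    exact ⟨U, hU, by rwa [← List.head?_eq_getElem?]⟩

variable (TX πb) in
lemma preimAt_length_sub_one (W : List AY) :
    preimAt TX πb W (W.length - 1) = Prod.snd '' pairing TX πb W := by
  ext b
  constructor
  · rintro ⟨U, hU, hb⟩
    have hne := ne_nil_of_mem_preim hU
    refine ⟨(U.head hne, b), ⟨U, hU, List.head?_eq_some_head hne, ?_⟩, rfl⟩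
    rwa [List.getLast?_eq_getElem?, length_eq_of_mem_preim hU]
  · rintro ⟨_, ⟨U, hU, -, hlast⟩, rfl⟩
    exact ⟨U, hU, by rwa [← length_eq_of_mem_preim hU, ← List.getLast?_eq_getElem?]⟩

lemma mem_preim_append {W₁ W₂ : List AY} (hW₁ : W₁ ≠ []) (hW₂ : W₂ ≠ []) {U : List AX} :
    U ∈ preim TX πb (W₁ ++ W₂) ↔ ∃ U₁ ∈ preim TX πb W₁, ∃ U₂ ∈ preim TX πb W₂,
      U = U₁ ++ U₂ ∧ ∀ x ∈ U₁.getLast?, ∀ y ∈ U₂.head?, TX x y := by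
  constructor
  · rintro ⟨⟨-, hchain⟩, hmap⟩
    obtain ⟨U₁, U₂, rfl, hU₁, hU₂⟩ := List.map_eq_append_iff.mp hmap
    obtain ⟨hchain₁, hchain₂, hjoin⟩ := List.isChain_append.mp hchain
    refine ⟨U₁, ⟨⟨?_, hchain₁⟩, hU₁⟩, U₂, ⟨⟨?_, hchain₂⟩, hU₂⟩, rfl, hjoin⟩
    · rintro rfl; exact hW₁ hU₁.symm
    · rintro rfl; exact hW₂ hU₂.symm
  · rintro ⟨U₁, ⟨⟨hne₁, hchain₁⟩, hU₁⟩, U₂, ⟨⟨-, hchain₂⟩, hU₂⟩, rfl, hjoin⟩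
    exact ⟨⟨by simp [hne₁], List.isChain_append.mpr ⟨hchain₁, hchain₂, hjoin⟩⟩,
      by rw [List.map_append, hU₁, hU₂]⟩

lemma pairing_append {W₁ W₂ : List AY} (hW₁ : W₁ ≠ []) (hW₂ : W₂ ≠ []) :
    pairing TX πb (W₁ ++ W₂) =
      pairing TX πb W₁ ○ {p | TX p.1 p.2} ○ pairing TX πb W₂ := by
  ext ⟨a, c⟩
  simp only [pairing, mem_preim_append hW₁ hW₂, mem_comp]
  constructor
  · rintro ⟨_, ⟨U₁, hU₁, U₂, hU₂, rfl, hjoin⟩, hhead, hlast⟩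
    have hne₁ := ne_nil_of_mem_preim hU₁
    have hne₂ := ne_nil_of_mem_preim hU₂
    rw [List.head?_append_of_ne_nil _ hne₁] at hhead
    rw [List.getLast?_append_of_ne_nil _ hne₂] at hlast
    exact ⟨U₂.head hne₂, ⟨U₁.getLast hne₁, ⟨U₁, hU₁, hhead, List.getLast?_eq_some_getLast hne₁⟩,
      hjoin _ (List.getLast?_eq_some_getLast hne₁) _ (List.head?_eq_some_head hne₂)⟩,
      U₂, hU₂, List.head?_eq_some_head hne₂, hlast⟩
  · rintro ⟨b', ⟨b, ⟨U₁, hU₁, hhead, hlast₁⟩, hTX⟩, U₂, hU₂, hhead₂, hlast⟩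
    refine ⟨U₁ ++ U₂, ⟨U₁, hU₁, U₂, hU₂, rfl, ?_⟩, ?_, ?_⟩
    · rintro x hx y hy
      rw [hlast₁, Option.mem_some_iff] at hx
      rw [hhead₂, Option.mem_some_iff] at hy
      exact hx ▸ hy ▸ hTX
    · rwa [List.head?_append_of_ne_nil _ (ne_nil_of_mem_preim hU₁)]
    · rwa [List.getLast?_append_of_ne_nil _ (ne_nil_of_mem_preim hU₂)]

lemma pairing_append_congr_left {W₁ W₂ : List AY} (hW₁ : W₁ ≠ []) (hW₂ : W₂ ≠ [])
    (h : pairing TX πb W₁ = pairing TX πb W₂) (V : List AY) :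
    pairing TX πb (W₁ ++ V) = pairing TX πb (W₂ ++ V) := by
  rcases eq_or_ne V [] with rfl | hV
  · simpa using h
  · rw [pairing_append hW₁ hV, pairing_append hW₂ hV, h]

lemma map_mem_head?_getLast?_of_mem_pairing {W : List AY} {x y : AX}
    (h : (x, y) ∈ pairing TX πb W) : πb x ∈ W.head? ∧ πb y ∈ W.getLast? := by
  obtain ⟨U, ⟨-, rfl⟩, hhead, hlast⟩ := h
  simp [List.head?_map, List.getLast?_map, hhead, hlast]

end Pairing

section Counting

variable {AX AY : Type*} [Fintype AX] [Fintype AY] [DecidableEq AY] {πb : AX → AY}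

lemma card_fiber_le_fMax (b : AY) : (fiber πb b).card ≤ fMax πb :=
  Finset.le_sup (f := fun b => (fiber πb b).card) (Finset.mem_univ b)

variable (πb) in
noncomputable def pairingForms (c : AY) : Finset (Set (AX × AX)) :=
  open scoped Classical in
  Finset.univ.biUnion fun d => (fiber πb c ×ˢ fiber πb d).powerset.image (↑)

lemma card_pairingForms_le (c : AY) :
    (pairingForms πb c).card ≤ Fintype.card AY * 2 ^ (fMax πb ^ 2) := by
  classical
  calc (pairingForms πb c).card
      ≤ ∑ d : AY, ((fiber πb c ×ˢ fiber πb d).powerset.image (↑) : Finset (Set (AX × AX))).card :=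
        Finset.card_biUnion_le
    _ ≤ ∑ _d : AY, 2 ^ (fMax πb ^ 2) := by
        refine Finset.sum_le_sum fun d _ => Finset.card_image_le.trans ?_
        rw [Finset.card_powerset, Finset.card_product, sq]
        exact Nat.pow_le_pow_right two_pos
          (Nat.mul_le_mul (card_fiber_le_fMax c) (card_fiber_le_fMax d))
    _ = Fintype.card AY * 2 ^ (fMax πb ^ 2) := by simp

lemma pairing_mem_pairingForms {TX : AX → AX → Prop} {W : List AY} {c : AY}
    (hc : W.head? = some c) : pairing TX πb W ∈ pairingForms πb c := by
  classical
  have hW : W ≠ [] := by rintro rfl; simp at hc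
  have hsub : pairing TX πb W ⊆ ↑(fiber πb c ×ˢ fiber πb (W.getLast hW)) := by
    rintro ⟨x, y⟩ hxy
    obtain ⟨hx, hy⟩ := map_mem_head?_getLast?_of_mem_pairing hxy
    rw [hc, Option.mem_some_iff] at hx
    rw [List.getLast?_eq_some_getLast hW, Option.mem_some_iff] at hy
    simp [fiber, hx, hy]
  simp only [pairingForms, Finset.mem_biUnion, Finset.mem_univ, true_and, Finset.mem_image,
    Finset.mem_powerset]
  refine ⟨W.getLast hW, (fiber πb c ×ˢ fiber πb (W.getLast hW)).filter (· ∈ pairing TX πb W),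
    Finset.filter_subset _ _, ?_⟩
  ext p
  simpa using fun hp => hsub hp

end Counting

section Shortening

variable {AX AY : Type*} [Fintype AX] [Fintype AY] [DecidableEq AY]
  {TX : AX → AX → Prop} {πb : AX → AY}

lemma exists_shorter_pairing_eq {W : List AY}
    (hW : Fintype.card AY * 2 ^ (fMax πb ^ 2) < W.length) :
    ∃ W' : List AY, W'.length < W.length ∧ pairing TX πb W' = pairing TX πb W := by
  have hne : W ≠ [] := by rintro rfl; simp at hW
  have hmaps : ∀ k ∈ Finset.range W.length,
      pairing TX πb (W.take (k + 1)) ∈ pairingForms πb (W.head hne) := fun k _ =>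
    pairing_mem_pairingForms (by rw [List.head?_take, if_neg k.succ_ne_zero,
      List.head?_eq_some_head hne])
  have hcard : (pairingForms πb (W.head hne)).card < (Finset.range W.length).card := by
    rw [Finset.card_range]
    exact (card_pairingForms_le _).trans_lt hW
  obtain ⟨i, hi, j, hj, hij, hpair⟩ := Finset.exists_ne_map_eq_of_card_lt_of_maps_to hcard hmaps
  wlog hlt : i < j generalizing i j
  · exact this j hj i hi hij.symm hpair.symm (hij.symm.lt_of_le (not_lt.mp hlt))
  have hj' := Finset.mem_range.mp hj
  refine ⟨W.take (i + 1) ++ W.drop (j + 1), by simp only [List.length_append, List.length_take, List.length_drop]; omega, ?_⟩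
  calc pairing TX πb (W.take (i + 1) ++ W.drop (j + 1))
      = pairing TX πb (W.take (j + 1) ++ W.drop (j + 1)) :=
        pairing_append_congr_left (by simp [hne]) (by simp [hne]) hpair _
    _ = pairing TX πb W := by rw [List.take_append_drop]

variable (TX πb) in
lemma exists_pairing_eq_length_le (W : List AY) :
    ∃ W' : List AY, pairing TX πb W' = pairing TX πb W ∧
      W'.length ≤ Fintype.card AY * 2 ^ (fMax πb ^ 2) := by
  classical
  have hex : ∃ n, ∃ W' : List AY, W'.length = n ∧ pairing TX πb W' = pairing TX πb W :=
    ⟨_, W, rfl, rfl⟩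
  obtain ⟨W', hlen, hpair⟩ := Nat.find_spec hex
  refine ⟨W', hpair, not_lt.mp fun hlong => ?_⟩
  obtain ⟨W'', hshorter, hpair''⟩ := exists_shorter_pairing_eq (TX := TX) hlong
  exact Nat.find_min hex (hlen ▸ hshorter) ⟨W'', rfl, hpair''.trans hpair⟩

end Shortening

theorem pairing_form_short_general {AX AY : Type*}
    [Fintype AX] [Fintype AY] [DecidableEq AY]
    (TX : AX → AX → Prop) (πb : AX → AY)
    (A B : Set AX) (γ : Set (AX × AX)) (W : List AY)
    (hW : IsYBlock TX πb W)
    (h0 : preimAt TX πb W 0 = A) (h1 : preimAt TX πb W (W.length - 1) = B)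
    (hγ : pairing TX πb W = γ) :
    ∃ W' : List AY, IsYBlock TX πb W' ∧
      preimAt TX πb W' 0 = A ∧
      preimAt TX πb W' (W'.length - 1) = B ∧
      pairing TX πb W' = γ ∧
      W'.length ≤ Fintype.card AY * 2 ^ ((fMax πb) ^ 2 + fMax πb) + 1 := by
  obtain ⟨W', hpair, hlen⟩ := exists_pairing_eq_length_le TX πb W
  refine ⟨W', ?_, ?_, ?_, hpair.trans hγ, ?_⟩
  · rwa [isYBlock_iff_pairing_nonempty, hpair, ← isYBlock_iff_pairing_nonempty]
  · rw [preimAt_zero, hpair, ← preimAt_zero, h0]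
  · rw [preimAt_length_sub_one, hpair, ← preimAt_length_sub_one, h1]
  · exact hlen.trans (Nat.le_add_right_of_le
      (Nat.mul_le_mul_left _ (Nat.pow_le_pow_right two_pos (Nat.le_add_right _ _))))

/-- If `A` pairs with `B` in form `γ`, then a block of length at most
`|𝒜(Y)| · 2 ^ (f² + f) + 1` realizes the same form `γ`. -/
theorem pairing_form_short {AX AY : Type*}
    [Fintype AX] [Fintype AY] [DecidableEq AX] [DecidableEq AY]
    (TX : AX → AX → Prop) (πb : AX → AY)
    (A B : Set AX) (γ : Set (AX × AX)) (W : List AY)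
    (hW : IsYBlock TX πb W)
    (h0 : preimAt TX πb W 0 = A) (h1 : preimAt TX πb W (W.length - 1) = B)
    (hγ : pairing TX πb W = γ) :
    ∃ W' : List AY, IsYBlock TX πb W' ∧
      preimAt TX πb W' 0 = A ∧
      preimAt TX πb W' (W'.length - 1) = B ∧
      pairing TX πb W' = γ ∧
      W'.length ≤ Fintype.card AY * 2 ^ ((fMax πb) ^ 2 + fMax πb) + 1 :=
  pairing_form_short_general TX πb A B γ W hW h0 h1 hγ
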